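/- arXiv:2007.15520 — 2 statements merged into one kernel-verified Lean document; each statement's English description precedes it below -/
import Mathlib

section
/- Let G be a congestion game with N players and nonnegative cost functions f_e, let λ ∈ ℝ, and let f'_e : ℕ → ℝ be nondecreasing modified cost functions such that for every resource e and all naturals n, m, z with n + z ≤ N and m + z ≤ N: λ·Σ_{i=z+1}^{m+z} f_e(i) − m·f'_e(n+z+1) + n·f'_e(n+z) ≥ Σ_{i=z+1}^{n+z} f_e(i). Then G is strongly (λ, 0)-smooth with respect to the potential: for every subset F ⊆ 𝒩, every profile s, and every tuple (s*_u)_{u∈F} of strategies s*_u ∈ S_u, it holds that λ·φ^F(s*_F, s_{-F}) ≥ Σ_{u∈F} c'_u(s*_u, s_{-u}) − Σ_{u∈F} c'_u(s) + φ^F(s), where (s*_F, s_{-F}) is the profile in which players of F play s*_u and the rest play s. -/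
open Finset

/-- The number of players of the set `F` using resource `e` in the profile `s`. -/
def congLoadF {ι E : Type*} [DecidableEq E] (F : Finset ι) (s : ι → Finset E) (e : E) : ℕ :=
  (F.filter fun u => e ∈ s u).card

/-- The number of players using resource `e` in the profile `s`. -/
def congLoad {ι E : Type*} [Fintype ι] [DecidableEq E] (s : ι → Finset E) (e : E) : ℕ :=
  congLoadF Finset.univ s e

/-- The cost of player `u` in profile `s` with resource cost functions `f`. -/
def congCost {ι E : Type*} [Fintype ι] [DecidableEq E]
    (f : E → ℕ → ℝ) (s : ι → Finset E) (u : ι) : ℝ :=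
  ∑ e ∈ s u, f e (congLoad s e)

/-- The potential `φ^F(t)` of the subgame induced by the players of `F`, with the remaining
players frozen at the profile `s`:
`φ^F(t) = ∑_e ∑_{i=1}^{n_e^F(t)} f_e (i + n_e^{𝒩∖F}(s))`. -/
def congPotF {ι E : Type*} [Fintype ι] [DecidableEq ι] [DecidableEq E] [Fintype E]
    (f : E → ℕ → ℝ) (F : Finset ι) (s t : ι → Finset E) : ℝ :=
  ∑ e, ∑ i ∈ Finset.Icc 1 (congLoadF F t e), f e (i + congLoadF (Finset.univ \ F) s e)

lemma congSumShift (g : ℕ → ℝ) (m z : ℕ) :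
    ∑ i ∈ Finset.Icc 1 m, g (i + z) = ∑ i ∈ Finset.Icc (z + 1) (m + z), g i := by
  have h : Finset.Icc (z + 1) (m + z) = (Finset.Icc 1 m).map (addLeftEmbedding z) := by
    rw [Finset.map_add_left_Icc, add_comm m z]
  rw [h, Finset.sum_map]
  exact Finset.sum_congr rfl fun i _ => by simp [addLeftEmbedding, add_comm]

lemma congSumCount {ι E : Type*} [Fintype E] [DecidableEq E]
    (F : Finset ι) (s : ι → Finset E) (g : E → ℝ) :
    ∑ u ∈ F, ∑ e ∈ s u, g e = ∑ e, (congLoadF F s e : ℝ) * g e := by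
  have h1 : ∀ u, ∑ e ∈ s u, g e = ∑ e, if e ∈ s u then g e else 0 := by
    intro u; rw [Finset.sum_ite_mem, Finset.univ_inter]
  simp only [h1]
  rw [Finset.sum_comm]
  refine Finset.sum_congr rfl fun e _ => ?_
  rw [Finset.sum_ite, Finset.sum_const, Finset.sum_const_zero, add_zero, nsmul_eq_mul]
  rfl


/-- If the modified cost functions `f'` satisfy the per-resource strong
smoothness condition, then for every subset `F` of the players the congestion game is strongly
`(lam, 0)`-smooth with respect to the potential of the subgame induced by `F`. -/
theorem strong_smoothness
    {ι E : Type*} [Fintype ι] [DecidableEq ι] [Fintype E] [DecidableEq E]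
    (Strat : ι → Finset (Finset E)) (hStrat : ∀ u, (Strat u).Nonempty)
    (f f' : E → ℕ → ℝ)
    (hfnonneg : ∀ e n, 0 ≤ f e n)
    (hf'mono : ∀ e, Monotone (f' e))
    (lam : ℝ)
    (hsmooth : ∀ e, ∀ n m z : ℕ, n + z ≤ Fintype.card ι → m + z ≤ Fintype.card ι →
      lam * (∑ i ∈ Finset.Icc (z + 1) (m + z), f e i)
          - (m : ℝ) * f' e (n + z + 1) + (n : ℝ) * f' e (n + z)
        ≥ ∑ i ∈ Finset.Icc (z + 1) (n + z), f e i)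
    (F : Finset ι)
    (s : ι → Finset E) (hs : ∀ u, s u ∈ Strat u)
    (sstar : ι → Finset E) (hsstar : ∀ u ∈ F, sstar u ∈ Strat u) :
    lam * congPotF f F s (fun u => if u ∈ F then sstar u else s u) ≥
      (∑ u ∈ F, congCost f' (Function.update s u (sstar u)) u)
        - (∑ u ∈ F, congCost f' s u) + congPotF f F s s := by
  classical
  set t : ι → Finset E := fun u => if u ∈ F then sstar u else s u with ht
  set n : E → ℕ := fun e => congLoadF F s e with hn
  set m : E → ℕ := fun e => congLoadF F t e with hm
  set z : E → ℕ := fun e => congLoadF (Finset.univ \ F) s e with hz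
  have hload : ∀ e, congLoad s e = n e + z e := by
    intro e
    simp only [hn, hz, congLoad, congLoadF]
    rw [← Finset.card_union_of_disjoint
        (Finset.disjoint_filter_filter Finset.disjoint_sdiff),
      ← Finset.filter_union, Finset.union_sdiff_of_subset (Finset.subset_univ F)]
  have hnz : ∀ e, n e + z e ≤ Fintype.card ι := by
    intro e
    rw [← hload]
    exact (Finset.card_filter_le _ _).trans_eq Finset.card_univ
  have hmz : ∀ e, m e + z e ≤ Fintype.card ι := by
    intro e
    have h1 : m e ≤ F.card := Finset.card_filter_le _ _
    have h2 : z e ≤ (Finset.univ \ F).card := Finset.card_filter_le _ _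
    have h3 : F.card + (Finset.univ \ F).card = Fintype.card ι := by
      rw [← Finset.card_union_of_disjoint Finset.disjoint_sdiff,
        Finset.union_sdiff_of_subset (Finset.subset_univ F), Finset.card_univ]
    omega
  have hm' : ∀ e, m e = congLoadF F sstar e := by
    intro e
    simp only [hm, congLoadF]
    congr 1
    apply Finset.filter_congr
    intro u hu
    simp [ht, hu]
  have hpot_t : congPotF f F s t = ∑ e, ∑ i ∈ Finset.Icc (z e + 1) (m e + z e), f e i :=
    Finset.sum_congr rfl fun e _ => congSumShift (f e) (m e) (z e)
  have hpot_s : congPotF f F s s = ∑ e, ∑ i ∈ Finset.Icc (z e + 1) (n e + z e), f e i :=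
    Finset.sum_congr rfl fun e _ => congSumShift (f e) (n e) (z e)
  have hB : ∑ u ∈ F, congCost f' s u = ∑ e, (n e : ℝ) * f' e (n e + z e) := by
    simp only [congCost]
    rw [congSumCount F s (fun e => f' e (congLoad s e))]
    exact Finset.sum_congr rfl fun e _ => by rw [hload e]
  have hA : ∑ u ∈ F, congCost f' (Function.update s u (sstar u)) u
      ≤ ∑ e, (m e : ℝ) * f' e (n e + z e + 1) := by
    have step1 : ∀ u ∈ F, congCost f' (Function.update s u (sstar u)) u
        ≤ ∑ e ∈ sstar u, f' e (n e + z e + 1) := by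
      intro u hu
      simp only [congCost, Function.update_self]
      refine Finset.sum_le_sum fun e he => hf'mono e ?_
      have hsub : Finset.univ.filter (fun v => e ∈ Function.update s u (sstar u) v)
          ⊆ insert u (Finset.univ.filter fun v => e ∈ s v) := by
        intro v hv
        simp only [Finset.mem_filter, Finset.mem_univ, true_and] at hv
        by_cases hvu : v = u
        · simp [hvu]
        · rw [Function.update_of_ne hvu] at hv
          exact Finset.mem_insert_of_mem (by simp [hv])
      calc congLoad (Function.update s u (sstar u)) e
          ≤ (insert u (Finset.univ.filter fun v => e ∈ s v)).card :=
            Finset.card_le_card hsub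
        _ ≤ (Finset.univ.filter fun v => e ∈ s v).card + 1 := Finset.card_insert_le _ _
        _ = n e + z e + 1 := by rw [← hload e]; rfl
    calc ∑ u ∈ F, congCost f' (Function.update s u (sstar u)) u
        ≤ ∑ u ∈ F, ∑ e ∈ sstar u, f' e (n e + z e + 1) := Finset.sum_le_sum step1
      _ = ∑ e, (congLoadF F sstar e : ℝ) * f' e (n e + z e + 1) :=
          congSumCount F sstar (fun e => f' e (n e + z e + 1))
      _ = ∑ e, (m e : ℝ) * f' e (n e + z e + 1) := by
          exact Finset.sum_congr rfl fun e _ => by rw [hm' e]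
  have hkey : ∑ e, ((m e : ℝ) * f' e (n e + z e + 1) - (n e : ℝ) * f' e (n e + z e)
      + ∑ i ∈ Finset.Icc (z e + 1) (n e + z e), f e i)
      ≤ ∑ e, lam * ∑ i ∈ Finset.Icc (z e + 1) (m e + z e), f e i := by
    refine Finset.sum_le_sum fun e _ => ?_
    have := hsmooth e (n e) (m e) (z e) (hnz e) (hmz e)
    linarith
  rw [Finset.sum_add_distrib, Finset.sum_sub_distrib] at hkey
  rw [hpot_t, hpot_s, hB, Finset.mul_sum]
  linarith
end

section
/- Let G be a congestion game with N players whose cost functions f_e are nonnegative and nondecreasing, let λ ≥ 1, and let f'_e : ℕ → ℝ be nondecreasing modified cost functions such that for every resource e and all naturals n, m, z with n + z ≤ N and m + z ≤ N: λ·Σ_{i=z+1}^{m+z} f_e(i) − m·f'_e(n+z+1) + n·f'_e(n+z) ≥ Σ_{i=z+1}^{n+z} f_e(i). Let q > 1 be a real with 1 + N·λ·(1−q)/q > 0 and set θ(q) = λ/(1 + N·λ·(1−q)/q). If s is a q-approximate equilibrium with respect to the modified costs, i.e., c'_u(s) ≤ q·c'_u(s'_u, s_{-u}) for every player u and every s'_u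 ∈ S_u, then for every subset F ⊆ 𝒩 and every tuple (s*_u)_{u∈F} of strategies: φ^F(s) ≤ θ(q)·φ^F(s*_F, s_{-F}). -/
open Finset

lemma icc_shift (g : ℕ → ℝ) (z n : ℕ) :
    ∑ i ∈ Icc 1 n, g (i + z) = ∑ i ∈ Icc (z + 1) (n + z), g i := by
  have h : Icc (z + 1) (n + z) = (Icc 1 n).map (addRightEmbedding z) := by
    rw [Finset.map_add_right_Icc, add_comm z 1]
  rw [h, Finset.sum_map]; rfl

lemma swap_sum {ι E : Type*} [Fintype E] [DecidableEq E] (F : Finset ι)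
    (S : ι → Finset E) (g : E → ℝ) :
    ∑ u ∈ F, ∑ e ∈ S u, g e = ∑ e, (congLoadF F S e : ℝ) * g e := by
  calc ∑ u ∈ F, ∑ e ∈ S u, g e = ∑ u ∈ F, ∑ e, if e ∈ S u then g e else 0 := by
        simp [Finset.sum_ite_mem]
    _ = ∑ e, ∑ u ∈ F, if e ∈ S u then g e else 0 := Finset.sum_comm
    _ = _ := by
        refine Finset.sum_congr rfl fun e _ => ?_
        rw [← Finset.sum_filter, Finset.sum_const, nsmul_eq_mul]; rfl

lemma congLoadF_le {ι E : Type*} [DecidableEq E] (F : Finset ι) (s : ι → Finset E) (e : E) :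
    congLoadF F s e ≤ F.card := Finset.card_filter_le _ _

lemma congLoad_split {ι E : Type*} [Fintype ι] [DecidableEq ι] [DecidableEq E]
    (F : Finset ι) (s : ι → Finset E) (e : E) :
    congLoad s e = congLoadF F s e + congLoadF (Finset.univ \ F) s e := by
  unfold congLoad congLoadF
  rw [← Finset.card_union_of_disjoint, ← Finset.filter_union,
    Finset.union_sdiff_of_subset (Finset.subset_univ F)]
  exact Finset.disjoint_filter_filter Finset.disjoint_sdiff

lemma congLoadF_congr {ι E : Type*} [DecidableEq E] (F : Finset ι) (s t : ι → Finset E)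
    (h : ∀ u ∈ F, s u = t u) (e : E) : congLoadF F s e = congLoadF F t e := by
  unfold congLoadF
  congr 1
  exact Finset.filter_congr fun u hu => by rw [h u hu]

lemma congLoad_update_le {ι E : Type*} [Fintype ι] [DecidableEq ι] [DecidableEq E]
    (s : ι → Finset E) (u : ι) (v : Finset E) (e : E) :
    congLoad (Function.update s u v) e ≤ congLoad s e + 1 := by
  unfold congLoad congLoadF
  have hsub : (Finset.univ.filter fun w => e ∈ Function.update s u v w)
      ⊆ insert u (Finset.univ.filter fun w => e ∈ s w) := by
    intro w hw
    simp only [Finset.mem_filter, Finset.mem_univ, true_and] at hw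
    by_cases hwu : w = u
    · simp [hwu]
    · rw [Function.update_of_ne hwu] at hw
      exact Finset.mem_insert_of_mem (by simp [hw])
  exact le_trans (Finset.card_le_card hsub) (Finset.card_insert_le _ _)

/-- If `s` is a `q`-approximate equilibrium with respect to modified cost
functions `f'` satisfying the strong smoothness condition with parameter `lam ≥ 1`, then for
every subset `F` of the players and every tuple of alternative strategies,
`φ^F(s) ≤ θ(q) * φ^F(s*_F, s_{-F})` with `θ(q) = lam / (1 + N * lam * (1 - q) / q)`. -/
theorem stretch_of_q_equilibrium
    {ι E : Type*} [Fintype ι] [DecidableEq ι] [Fintype E] [DecidableEq E]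
    (Strat : ι → Finset (Finset E)) (hStrat : ∀ u, (Strat u).Nonempty)
    (f f' : E → ℕ → ℝ)
    (hfnonneg : ∀ e n, 0 ≤ f e n)
    (hfmono : ∀ e, Monotone (f e))
    (hf'mono : ∀ e, Monotone (f' e))
    (lam : ℝ) (hlam : 1 ≤ lam)
    (hsmooth : ∀ e, ∀ n m z : ℕ, n + z ≤ Fintype.card ι → m + z ≤ Fintype.card ι →
      lam * (∑ i ∈ Finset.Icc (z + 1) (m + z), f e i)
          - (m : ℝ) * f' e (n + z + 1) + (n : ℝ) * f' e (n + z)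
        ≥ ∑ i ∈ Finset.Icc (z + 1) (n + z), f e i)
    (q : ℝ) (hq : 1 < q)
    (hden : 0 < 1 + (Fintype.card ι : ℝ) * lam * (1 - q) / q)
    (θ : ℝ) (hθ : θ = lam / (1 + (Fintype.card ι : ℝ) * lam * (1 - q) / q))
    (s : ι → Finset E) (hs : ∀ u, s u ∈ Strat u)
    (hqeq : ∀ (u : ι), ∀ s'u ∈ Strat u,
      congCost f' s u ≤ q * congCost f' (Function.update s u s'u) u)
    (F : Finset ι)
    (sstar : ι → Finset E) (hsstar : ∀ u ∈ F, sstar u ∈ Strat u) :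
    congPotF f F s s ≤ θ * congPotF f F s (fun u => if u ∈ F then sstar u else s u) := by
  set N := Fintype.card ι with hN
  set t : ι → Finset E := fun u => if u ∈ F then sstar u else s u with ht
  set n : E → ℕ := fun e => congLoadF F s e with hn
  set m : E → ℕ := fun e => congLoadF F t e with hm
  set z : E → ℕ := fun e => congLoadF (Finset.univ \ F) s e with hz
  have hq0 : (0 : ℝ) < q := lt_trans one_pos hq
  have hlam0 : (0 : ℝ) ≤ lam := le_trans zero_le_one hlam
  -- loads
  have hnz : ∀ e, congLoad s e = n e + z e := fun e => congLoad_split F s e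
  have hzt : ∀ e, congLoadF (Finset.univ \ F) t e = z e := by
    intro e
    exact congLoadF_congr _ t s (fun u hu => by
      simp only [Finset.mem_sdiff] at hu
      simp [ht, hu.2]) e
  have hnzN : ∀ e, n e + z e ≤ N := fun e => by
    rw [← hnz e]; exact le_trans (congLoadF_le _ _ _) (by simp [hN])
  have hmzN : ∀ e, m e + z e ≤ N := fun e => by
    have : congLoad t e = m e + z e := by rw [congLoad_split F t e, hzt e]
    rw [← this]; exact le_trans (congLoadF_le _ _ _) (by simp [hN])
  -- main quantities
  set B : ℝ := ∑ e, (n e : ℝ) * f' e (congLoad s e) with hB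
  set A : ℝ := ∑ e, (m e : ℝ) * f' e (congLoad s e + 1) with hA
  set P : ℝ := congPotF f F s s with hP
  set T : ℝ := congPotF f F s t with hT
  -- Step 1: B ≤ q * A  (equilibrium)
  have hBA : B ≤ q * A := by
    have hper : ∀ u ∈ F, congCost f' s u ≤ q * ∑ e ∈ sstar u, f' e (congLoad s e + 1) := by
      intro u hu
      refine le_trans (hqeq u (sstar u) (hsstar u hu)) ?_
      refine mul_le_mul_of_nonneg_left ?_ (le_of_lt hq0)
      unfold congCost
      rw [Function.update_self]
      exact Finset.sum_le_sum fun e _ => hf'mono e (congLoad_update_le s u (sstar u) e)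
    have h1 : ∑ u ∈ F, congCost f' s u ≤ q * ∑ u ∈ F, ∑ e ∈ sstar u, f' e (congLoad s e + 1) := by
      rw [Finset.mul_sum]
      exact Finset.sum_le_sum hper
    have h2 : ∑ u ∈ F, congCost f' s u = B := by
      rw [hB]; exact swap_sum F s _
    have h3 : ∑ u ∈ F, ∑ e ∈ sstar u, f' e (congLoad s e + 1) = A := by
      rw [hA, swap_sum F sstar _]
      refine Finset.sum_congr rfl fun e _ => ?_
      rw [congLoadF_congr F sstar t (fun u hu => by simp [ht, hu]) e]
    rw [h2, h3] at h1; exact h1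
  -- Step 2: P ≤ lam * T - A + B  (smoothness summed)
  have hPT : P ≤ lam * T - A + B := by
    have hkey : ∀ e ∈ (Finset.univ : Finset E),
        (∑ i ∈ Icc 1 (n e), f e (i + z e)) ≤
          lam * (∑ i ∈ Icc 1 (m e), f e (i + z e))
            - (m e : ℝ) * f' e (congLoad s e + 1) + (n e : ℝ) * f' e (congLoad s e) := by
      intro e _
      rw [icc_shift (fun i => f e i) (z e) (n e), icc_shift (fun i => f e i) (z e) (m e),
        hnz e]
      exact hsmooth e (n e) (m e) (z e) (hnzN e) (hmzN e)
    have h1 : P ≤ ∑ e, (lam * (∑ i ∈ Icc 1 (m e), f e (i + z e))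
        - (m e : ℝ) * f' e (congLoad s e + 1) + (n e : ℝ) * f' e (congLoad s e)) := by
      rw [hP]; exact Finset.sum_le_sum hkey
    calc P ≤ _ := h1
      _ = lam * T - A + B := by
          rw [Finset.sum_add_distrib, Finset.sum_sub_distrib, ← Finset.mul_sum, hT, hA, hB]
          rfl
  -- Step 3: B ≤ N * lam * P
  have hBP : B ≤ (N : ℝ) * lam * P := by
    have hper : ∀ e ∈ (Finset.univ : Finset E),
        (n e : ℝ) * f' e (congLoad s e) ≤
          (N : ℝ) * lam * ∑ i ∈ Icc 1 (n e), f e (i + z e) := by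
      intro e _
      rw [hnz e]
      rcases Nat.eq_zero_or_pos (n e) with h0 | hpos
      · rw [h0]; simp
      · obtain ⟨k, hk⟩ : ∃ k, n e = k + 1 := ⟨n e - 1, by omega⟩
        have hc1 : k + z e ≤ N := by have := hnzN e; omega
        have hc2 : 1 + (k + z e) ≤ N := by have := hnzN e; omega
        have hs1 := hsmooth e 0 1 (k + z e) (by omega) hc2
        have e1 : Icc (k + z e + 1) (1 + (k + z e)) = {k + z e + 1} := by
          rw [add_comm 1]; exact Finset.Icc_self _
        have e2 : Icc (k + z e + 1) (0 + (k + z e)) = (∅ : Finset ℕ) := by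
          rw [Finset.Icc_eq_empty]; omega
        rw [e1, e2] at hs1
        simp only [Finset.sum_singleton, Finset.sum_empty, Nat.cast_one, Nat.cast_zero,
          one_mul, zero_mul, add_zero, zero_add, ge_iff_le] at hs1
        -- hs1 : 0 ≤ lam * f e (k + z e + 1) - f' e (k + z e + 1)
        have heq : k + z e + 1 = n e + z e := by omega
        rw [heq] at hs1
        have hfle : f e (n e + z e) ≤ ∑ i ∈ Icc 1 (n e), f e (i + z e) := by
          have hmem : n e ∈ Icc 1 (n e) := by simp; omega
          exact Finset.single_le_sum (f := fun i => f e (i + z e)) (fun i _ => hfnonneg e _) hmem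
        have hnN : (n e : ℝ) ≤ (N : ℝ) := by
          have : n e ≤ N := le_trans (Nat.le_add_right _ _) (hnzN e)
          exact_mod_cast this
        have hf0 : (0 : ℝ) ≤ f e (n e + z e) := hfnonneg e _
        have hsum0 : (0 : ℝ) ≤ ∑ i ∈ Icc 1 (n e), f e (i + z e) :=
          Finset.sum_nonneg fun i _ => hfnonneg e _
        calc (n e : ℝ) * f' e (n e + z e)
            ≤ (n e : ℝ) * (lam * f e (n e + z e)) := by
              refine mul_le_mul_of_nonneg_left (by linarith) (by positivity)
          _ ≤ (N : ℝ) * (lam * ∑ i ∈ Icc 1 (n e), f e (i + z e)) := by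
              refine mul_le_mul hnN (mul_le_mul_of_nonneg_left hfle hlam0)
                (by positivity) (by positivity)
          _ = (N : ℝ) * lam * ∑ i ∈ Icc 1 (n e), f e (i + z e) := by ring
    calc B = ∑ e, (n e : ℝ) * f' e (congLoad s e) := hB
      _ ≤ ∑ e, (N : ℝ) * lam * ∑ i ∈ Icc 1 (n e), f e (i + z e) := Finset.sum_le_sum hper
      _ = (N : ℝ) * lam * P := by rw [← Finset.mul_sum, hP]; rfl
  -- Final algebra
  have hAB : B / q ≤ A := (div_le_iff₀ hq0).mpr (by linarith [hBA])
  have hD : P * (1 + (N : ℝ) * lam * (1 - q) / q) ≤ lam * T := by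
    have h1 : P ≤ lam * T + B * (q - 1) / q := by
      have hbb : B - B / q = B * (q - 1) / q := by field_simp
      linarith [hAB, hPT]
    have h2 : B * (q - 1) / q ≤ (N : ℝ) * lam * P * (q - 1) / q := by
      have h2a : B * (q - 1) ≤ (N : ℝ) * lam * P * (q - 1) :=
        mul_le_mul_of_nonneg_right hBP (by linarith)
      rw [div_eq_mul_inv, div_eq_mul_inv]
      exact mul_le_mul_of_nonneg_right h2a (by positivity)
    have h3 : P * (1 + (N : ℝ) * lam * (1 - q) / q)
        = P - (N : ℝ) * lam * P * (q - 1) / q := by field_simp; ring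
    linarith [h1, h2]
  rw [hθ, div_mul_eq_mul_div]
  exact (le_div_iff₀ hden).mpr hD
end
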